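/- arXiv:2104.13792 — 6 statements merged into one kernel-verified Lean document; each statement's English description precedes it below -/
import Mathlib

section
/- In hereditarily finite set theory (where every set is a finite set of hereditarily finite sets, with empty set 0, insertion operation x ◁ y = x ∪ {y}, and the induction axiom: if P(0) and for all x,y, P(x) and P(y) imply P(x ◁ y), then P holds of all sets), the extensionality principle holds: two HF sets are equal if and only if they have the same elements. -/
/-- Extensionality in HF set theory, derived from the three HF axioms. -/
theorem hf_extensionality
    (HF : Type) (mem : HF → HF → Prop) (zero : HF) (eats : HF → HF → HF)
    (hf1 : ∀ z : HF, z = zero ↔ ∀ x, ¬ mem x z)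
    (hf2 : ∀ z x y : HF, z = eats x y ↔ ∀ u, mem u z ↔ (mem u x ∨ u = y))
    (hf3 : ∀ P : HF → Prop, P zero → (∀ x y, P x → P y → P (eats x y)) → ∀ x, P x) :
    ∀ x y : HF, x = y ↔ (∀ u, mem u x ↔ mem u y) := by
  intro x y
  constructor
  · rintro rfl
    exact fun u => Iff.rfl
  · intro h
    refine hf3 (fun x => ∀ y, (∀ u, mem u x ↔ mem u y) → x = y) ?_ ?_ x y h
    · intro y h
      exact ((hf1 y).mpr fun u hu => (hf1 zero).mp rfl u ((h u).mpr hu)).symm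
    · intro a b _ _ y h
      exact ((hf2 y a b).mpr fun u => (h u).symm.trans ((hf2 (eats a b) a b).mp rfl u)).symm
end

section
/- In HF set theory, the membership relation is well-founded: there is no HF set x with x ∈ x, and more generally every nonempty HF set has an ∈-minimal element (Foundation). -/
/-- Foundation in HF set theory: no self-membership, and every nonempty set
has an ∈-minimal element. -/
theorem hf_foundation
    (HF : Type) (mem : HF → HF → Prop) (zero : HF) (eats : HF → HF → HF)
    (hf1 : ∀ z : HF, z = zero ↔ ∀ x, ¬ mem x z)
    (hf2 : ∀ z x y : HF, z = eats x y ↔ ∀ u, mem u z ↔ (mem u x ∨ u = y))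
    (hf3 : ∀ P : HF → Prop, P zero → (∀ x y, P x → P y → P (eats x y)) → ∀ x, P x) :
    (∀ x : HF, ¬ mem x x) ∧
    (∀ z : HF, (∃ x, mem x z) → ∃ m, mem m z ∧ ∀ y, mem y m → ¬ mem y z) := by
  have memzero : ∀ u, ¬ mem u zero := (hf1 zero).mp rfl
  have memeats : ∀ x y u, mem u (eats x y) ↔ (mem u x ∨ u = y) :=
    fun x y => (hf2 (eats x y) x y).mp rfl
  -- ∈-induction
  have epsind : ∀ R : HF → Prop, (∀ x, (∀ y, mem y x → R y) → R x) → ∀ x, R x := by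
    intro R h x
    have key : ∀ x, R x ∧ ∀ y, mem y x → R y := by
      refine hf3 _ ⟨h zero (fun y hy => absurd hy (memzero y)), fun y hy => absurd hy (memzero y)⟩ ?_
      intro a b ha hb
      have helts : ∀ y, mem y (eats a b) → R y := by
        intro y hy
        rcases (memeats a b y).mp hy with h' | h'
        · exact ha.2 y h'
        · exact h' ▸ hb.1
      exact ⟨h _ helts, helts⟩
    exact (key x).1
  -- foundation for sets containing x
  have found : ∀ x z, mem x z → ∃ m, mem m z ∧ ∀ y, mem y m → ¬ mem y z := by
    intro x
    induction x using epsind with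
    | _ x ih =>
      intro z hxz
      by_cases hmin : ∀ y, mem y x → ¬ mem y z
      · exact ⟨x, hxz, hmin⟩
      · push_neg at hmin
        obtain ⟨y, hyx, hyz⟩ := hmin
        exact ih y hyx z hyz
  constructor
  · intro x hxx
    obtain ⟨m, hm, hmin⟩ := found x (eats zero x) ((memeats zero x x).mpr (Or.inr rfl))
    rcases (memeats zero x m).mp hm with h' | h'
    · exact memzero m h'
    · exact hmin x (h' ▸ hxx) ((memeats zero x x).mpr (Or.inr rfl))
  · intro z ⟨x, hx⟩
    exact found x z hx
end

section
/- The deduction theorem for the HF sequent calculus: if the set of hypotheses insert A H proves B, then H proves A → B. -/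
/-- Terms of the language of hereditarily finite set theory. -/
inductive Tm : Type where
  | Zero : Tm
  | Var : ℕ → Tm
  | Eats : Tm → Tm → Tm

/-- Formulas of the language of HF set theory (named-variable syntax). -/
inductive Fm : Type where
  | Mem : Tm → Tm → Fm
  | Eq : Tm → Tm → Fm
  | Disj : Fm → Fm → Fm
  | Neg : Fm → Fm
  | Ex : ℕ → Fm → Fm

/-- Substitution of a term for a variable in a term. -/
def substTm (i : ℕ) (x : Tm) : Tm → Tm
  | .Zero => .Zero
  | .Var k => if i = k then x else .Var k
  | .Eats t u => .Eats (substTm i x t) (substTm i x u)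

/-- Substitution of a term for a variable in a formula. -/
def substFm (i : ℕ) (x : Tm) : Fm → Fm
  | .Mem t u => .Mem (substTm i x t) (substTm i x u)
  | .Eq t u => .Eq (substTm i x t) (substTm i x u)
  | .Disj A B => .Disj (substFm i x A) (substFm i x B)
  | .Neg A => .Neg (substFm i x A)
  | .Ex k A => if i = k then .Ex k A else .Ex k (substFm i x A)

/-- Free variables of a term. -/
def fvTm : Tm → Finset ℕ
  | .Zero => ∅
  | .Var k => {k}
  | .Eats t u => fvTm t ∪ fvTm u

/-- Free variables of a formula. -/
def fvFm : Fm → Finset ℕ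
  | .Mem t u => fvTm t ∪ fvTm u
  | .Eq t u => fvTm t ∪ fvTm u
  | .Disj A B => fvFm A ∪ fvFm B
  | .Neg A => fvFm A
  | .Ex k A => fvFm A \ {k}

/-- All variables (free or bound) occurring in a formula. -/
def varsFm : Fm → Finset ℕ
  | .Mem t u => fvTm t ∪ fvTm u
  | .Eq t u => fvTm t ∪ fvTm u
  | .Disj A B => varsFm A ∪ varsFm B
  | .Neg A => varsFm A
  | .Ex k A => insert k (varsFm A)

/-- Derived connectives. -/
def fmImp (A B : Fm) : Fm := .Disj (.Neg A) B
def fmConj (A B : Fm) : Fm := .Neg (.Disj (.Neg A) (.Neg B))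
def fmIff (A B : Fm) : Fm := fmConj (fmImp A B) (fmImp B A)
def fmAll (i : ℕ) (A : Fm) : Fm := .Neg (.Ex i (.Neg A))
def fmAll2 (i : ℕ) (t : Tm) (A : Fm) : Fm := fmAll i (fmImp (.Mem (.Var i) t) A)

/-- Falsehood: `0 ∈ 0`. -/
def fmFls : Fm := .Mem .Zero .Zero

/-- The subset relation `t ⊆ u`, via a bounded universal quantifier with a fresh variable. -/
def SubsetFm (t u : Tm) : Fm :=
  fmAll2 (((fvTm t ∪ fvTm u).sup id) + 1) t (.Mem (.Var (((fvTm t ∪ fvTm u).sup id) + 1)) u)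

/-- Sentential (boolean) axioms. -/
inductive BoolAx : Fm → Prop where
  | ident (A) : BoolAx (fmImp A A)
  | disjI1 (A B) : BoolAx (fmImp A (.Disj A B))
  | disjCont (A) : BoolAx (fmImp (.Disj A A) A)
  | disjAssoc (A B C) : BoolAx (fmImp (.Disj A (.Disj B C)) (.Disj (.Disj A B) C))
  | disjConj (A B C) : BoolAx (fmImp (.Disj C A) (fmImp (.Disj (.Neg C) B) (.Disj A B)))

/-- Equality axioms. -/
def EqAx (A : Fm) : Prop :=
  A = .Eq (.Var 1) (.Var 1) ∨
  A = fmImp (fmConj (.Eq (.Var 1) (.Var 2)) (.Eq (.Var 3) (.Var 4)))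
        (fmImp (.Eq (.Var 1) (.Var 3)) (.Eq (.Var 2) (.Var 4))) ∨
  A = fmImp (fmConj (.Eq (.Var 1) (.Var 2)) (.Eq (.Var 3) (.Var 4)))
        (fmImp (.Mem (.Var 1) (.Var 3)) (.Mem (.Var 2) (.Var 4))) ∨
  A = fmImp (fmConj (.Eq (.Var 1) (.Var 2)) (.Eq (.Var 3) (.Var 4)))
        (.Eq (.Eats (.Var 1) (.Var 3)) (.Eats (.Var 2) (.Var 4)))

/-- Specialisation axioms `A(i := x) → ∃i A`. -/
inductive SpecAx : Fm → Prop where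
  | I (i : ℕ) (x : Tm) (A : Fm) : SpecAx (fmImp (substFm i x A) (.Ex i A))

/-- HF1: `z = 0 ↔ ∀x, x ∉ z`. -/
def HF1fm : Fm :=
  fmIff (.Eq (.Var 0) .Zero) (fmAll 1 (.Neg (.Mem (.Var 1) (.Var 0))))

/-- HF2: `z = x ◁ y ↔ ∀u, u ∈ z ↔ u ∈ x ∨ u = y`. -/
def HF2fm : Fm :=
  fmIff (.Eq (.Var 0) (.Eats (.Var 1) (.Var 2)))
    (fmAll 3 (fmIff (.Mem (.Var 3) (.Var 0))
      (.Disj (.Mem (.Var 3) (.Var 1)) (.Eq (.Var 3) (.Var 2)))))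

def HFAx (A : Fm) : Prop := A = HF1fm ∨ A = HF2fm

/-- The induction axiom scheme HF3. -/
inductive IndAx : Fm → Prop where
  | ind (i j : ℕ) (A : Fm) : j ≠ i → j ∉ fvFm A →
      IndAx (fmImp (substFm i .Zero A)
        (fmImp (fmAll i (fmAll j (fmImp A (fmImp (substFm i (.Var j) A)
              (substFm i (.Eats (.Var i) (.Var j)) A)))))
          (fmAll i A)))

/-- The (sequent-style) HF calculus `H ⊢ A`. -/
inductive Thm : Set Fm → Fm → Prop where
  | hyp {H A} : A ∈ H → Thm H A
  | bool {H A} : BoolAx A → Thm H A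
  | eq {H A} : EqAx A → Thm H A
  | spec {H A} : SpecAx A → Thm H A
  | hf {H A} : HFAx A → Thm H A
  | ind {H A} : IndAx A → Thm H A
  | mp {H H' A B} : Thm H (fmImp A B) → Thm H' A → Thm (H ∪ H') B
  | exi {H A B i} : Thm H (fmImp A B) → i ∉ fvFm B → (∀ C ∈ H, i ∉ fvFm C) →
      Thm H (fmImp (.Ex i A) B)

/-- The standard model of HF set theory: natural numbers with Ackermann membership. -/
def memN (x y : ℕ) : Prop := Nat.testBit y x = true

/-- Evaluation of terms in the standard model, relative to an environment. -/
def evalTm (e : ℕ → ℕ) : Tm → ℕ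
  | .Zero => 0
  | .Var k => e k
  | .Eats t u => evalTm e t ||| 2 ^ evalTm e u

/-- Evaluation (truth) of formulas in the standard model. -/
def evalFm (e : ℕ → ℕ) : Fm → Prop
  | .Mem t u => memN (evalTm e t) (evalTm e u)
  | .Eq t u => evalTm e t = evalTm e u
  | .Disj A B => evalFm e A ∨ evalFm e B
  | .Neg A => ¬ evalFm e A
  | .Ex k A => ∃ x : ℕ, evalFm (Function.update e k x) A

/-- The null environment. -/
def e0 : ℕ → ℕ := fun _ => 0

/-- Strict Σ formulas. -/
inductive SsFm : Fm → Prop where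
  | mem (i j : ℕ) : SsFm (.Mem (.Var i) (.Var j))
  | disj {A B} : SsFm A → SsFm B → SsFm (.Disj A B)
  | conj {A B} : SsFm A → SsFm B → SsFm (fmConj A B)
  | ex {A} (i : ℕ) : SsFm A → SsFm (.Ex i A)
  | all2 {A} (i j : ℕ) : SsFm A → j ≠ i → j ∉ fvFm A → SsFm (fmAll2 i (.Var j) A)

/-- Σ formulas: provably equivalent to a strict Σ formula with no new free variables. -/
def SigmaFm (A : Fm) : Prop :=
  ∃ B, SsFm B ∧ fvFm B ⊆ fvFm A ∧ Thm ∅ (fmIff A B)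

/-- α-equivalence of formulas. -/
inductive AEq : Fm → Fm → Prop where
  | mem (t u) : AEq (.Mem t u) (.Mem t u)
  | eq (t u) : AEq (.Eq t u) (.Eq t u)
  | disj {A A' B B'} : AEq A A' → AEq B B' → AEq (.Disj A B) (.Disj A' B')
  | neg {A A'} : AEq A A' → AEq (.Neg A) (.Neg A')
  | ex {A B} (i j : ℕ) :
      (∀ k, k ∉ varsFm A → k ∉ varsFm B → k ≠ i → k ≠ j →
        AEq (substFm i (.Var k) A) (substFm j (.Var k) B)) →
      AEq (.Ex i A) (.Ex j B)

/-- De Bruijn terms. -/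
inductive DbTm : Type where
  | DBZero : DbTm
  | DBVar : ℕ → DbTm
  | DBInd : ℕ → DbTm
  | DBEats : DbTm → DbTm → DbTm

/-- De Bruijn formulas. -/
inductive DbFm : Type where
  | DBMem : DbTm → DbTm → DbFm
  | DBEq : DbTm → DbTm → DbFm
  | DBDisj : DbFm → DbFm → DbFm
  | DBNeg : DbFm → DbFm
  | DBEx : DbFm → DbFm

/-- Lookup of a name in a list of bound names, innermost first. -/
def lookup : List ℕ → ℕ → ℕ → DbTm
  | [], _, x => .DBVar x
  | y :: ys, n, x => if x = y then .DBInd n else lookup ys (n+1) x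

/-- Translation of a term into de Bruijn form. -/
def transTm (e : List ℕ) : Tm → DbTm
  | .Zero => .DBZero
  | .Var k => lookup e 0 k
  | .Eats t u => .DBEats (transTm e t) (transTm e u)

/-- Translation of a formula into de Bruijn form. -/
def transFm (e : List ℕ) : Fm → DbFm
  | .Mem t u => .DBMem (transTm e t) (transTm e u)
  | .Eq t u => .DBEq (transTm e t) (transTm e u)
  | .Disj A B => .DBDisj (transFm e A) (transFm e B)
  | .Neg A => .DBNeg (transFm e A)
  | .Ex k A => .DBEx (transFm (k :: e) A)

/-- Abstraction of a de Bruijn term over a name, at binding depth `k`. -/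
def abstDbTm (v : ℕ) (k : ℕ) : DbTm → DbTm
  | .DBZero => .DBZero
  | .DBVar n => if n = v then .DBInd k else .DBVar n
  | .DBInd j => .DBInd j
  | .DBEats t u => .DBEats (abstDbTm v k t) (abstDbTm v k u)

/-- Abstraction of a de Bruijn formula over a name. -/
def abstDbFm (v : ℕ) (k : ℕ) : DbFm → DbFm
  | .DBMem t u => .DBMem (abstDbTm v k t) (abstDbTm v k u)
  | .DBEq t u => .DBEq (abstDbTm v k t) (abstDbTm v k u)
  | .DBDisj A B => .DBDisj (abstDbFm v k A) (abstDbFm v k B)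
  | .DBNeg A => .DBNeg (abstDbFm v k A)
  | .DBEx A => .DBEx (abstDbFm v (k+1) A)

/-- Well-formed de Bruijn terms (no indices at all). -/
inductive WfDbTm : DbTm → Prop where
  | zero : WfDbTm .DBZero
  | var (n : ℕ) : WfDbTm (.DBVar n)
  | eats {t u} : WfDbTm t → WfDbTm u → WfDbTm (.DBEats t u)

/-- Well-formed de Bruijn formulas. -/
inductive WfDbFm : DbFm → Prop where
  | mem {t u} : WfDbTm t → WfDbTm u → WfDbFm (.DBMem t u)
  | eq {t u} : WfDbTm t → WfDbTm u → WfDbFm (.DBEq t u)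
  | disj {A B} : WfDbFm A → WfDbFm B → WfDbFm (.DBDisj A B)
  | neg {A} : WfDbFm A → WfDbFm (.DBNeg A)
  | ex {A} (v : ℕ) : WfDbFm A → WfDbFm (.DBEx (abstDbFm v 0 A))

/-- Singleton `{x}` in the Ackermann model. -/
def singN (x : ℕ) : ℕ := 2 ^ x
/-- Unordered pair `{x, y}`. -/
def upairN (x y : ℕ) : ℕ := 2 ^ x ||| 2 ^ y
/-- Kuratowski ordered pair `⟨x, y⟩ = {{x}, {x,y}}`. -/
def hpairN (x y : ℕ) : ℕ := upairN (singN x) (upairN x y)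
/-- Von Neumann ordinals. -/
def ordN : ℕ → ℕ
  | 0 => 0
  | n+1 => ordN n ||| 2 ^ (ordN n)
/-- `htupleN n` is an `(n+2)`-tuple of zeros (right-nested pairs). -/
def htupleN : ℕ → ℕ
  | 0 => hpairN 0 0
  | n+1 => hpairN 0 (htupleN n)

/-- Gödel coding of de Bruijn terms by HF sets. -/
def quotDbTm : DbTm → ℕ
  | .DBZero => 0
  | .DBVar n => ordN (n+1)
  | .DBInd k => hpairN (htupleN 6) (ordN k)
  | .DBEats t u => hpairN (htupleN 1) (hpairN (quotDbTm t) (quotDbTm u))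

/-- Gödel coding of de Bruijn formulas by HF sets. -/
def quotDbFm : DbFm → ℕ
  | .DBMem t u => hpairN (htupleN 0) (hpairN (quotDbTm t) (quotDbTm u))
  | .DBEq t u => hpairN (htupleN 2) (hpairN (quotDbTm t) (quotDbTm u))
  | .DBDisj A B => hpairN (htupleN 3) (hpairN (quotDbFm A) (quotDbFm B))
  | .DBNeg A => hpairN (htupleN 4) (quotDbFm A)
  | .DBEx A => hpairN (htupleN 5) (quotDbFm A)

/-- The code (as an HF set) of a term / of a formula. -/
def codeTmN (t : Tm) : ℕ := quotDbTm (transTm [] t)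
def codeFmN (A : Fm) : ℕ := quotDbFm (transFm [] A)

/-- HF-term constructors for pairs, ordinals, tuples: the quotation `⌜·⌝` as a term. -/
def HPairT (x y : Tm) : Tm :=
  .Eats (.Eats .Zero (.Eats .Zero x)) (.Eats (.Eats .Zero x) y)
def OrdOfT : ℕ → Tm
  | 0 => .Zero
  | n+1 => .Eats (OrdOfT n) (OrdOfT n)
def HTupleT : ℕ → Tm
  | 0 => HPairT .Zero .Zero
  | n+1 => HPairT .Zero (HTupleT n)

def quotDbTmT : DbTm → Tm
  | .DBZero => .Zero
  | .DBVar n => OrdOfT (n+1)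
  | .DBInd k => HPairT (HTupleT 6) (OrdOfT k)
  | .DBEats t u => HPairT (HTupleT 1) (HPairT (quotDbTmT t) (quotDbTmT u))

def quotDbFmT : DbFm → Tm
  | .DBMem t u => HPairT (HTupleT 0) (HPairT (quotDbTmT t) (quotDbTmT u))
  | .DBEq t u => HPairT (HTupleT 2) (HPairT (quotDbTmT t) (quotDbTmT u))
  | .DBDisj A B => HPairT (HTupleT 3) (HPairT (quotDbFmT A) (quotDbFmT B))
  | .DBNeg A => HPairT (HTupleT 4) (quotDbFmT A)
  | .DBEx A => HPairT (HTupleT 5) (quotDbFmT A)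

/-- The Gödel-code term `⌜t⌝` of a term, and `⌜A⌝` of a formula. -/
def qTm (t : Tm) : Tm := quotDbTmT (transTm [] t)
def qFm (A : Fm) : Tm := quotDbFmT (transFm [] A)

/-- `Q_Imp x y`: the HF term constructing the code of an implication
(implication `A → B` being `¬A ∨ B`). -/
def QImp (x y : Tm) : Tm := HPairT (HTupleT 3) (HPairT (HPairT (HTupleT 4) x) y)

/-- The shadow provability predicate: `x` is the code of a theorem. -/
def PfShadow (x : ℕ) : Prop := ∃ A : Fm, x = codeFmN A ∧ Thm ∅ A

/-- `Pf` is a provability predicate: a Σ formula with only the free variable `0`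
whose standard semantics is provability of the coded formula. -/
def IsProvabilityPred (Pf : Fm) : Prop :=
  SigmaFm Pf ∧ fvFm Pf ⊆ {0} ∧
  ∀ x : ℕ, (evalFm (Function.update e0 0 x) Pf ↔ PfShadow x)

/-- Application of a provability predicate to a (code) term: `PfP t`. -/
def PfApp (Pf : Fm) (t : Tm) : Fm := substFm 0 t Pf

namespace DedAux

lemma mp' {H : Set Fm} {A B : Fm} (h1 : Thm H (fmImp A B)) (h2 : Thm H A) : Thm H B := by
  have := Thm.mp h1 h2
  rwa [Set.union_self] at this

lemma disj1 {H : Set Fm} {A : Fm} (B : Fm) (h : Thm H A) : Thm H (.Disj A B) :=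
  mp' (Thm.bool (BoolAx.disjI1 A B)) h

lemma comm {H : Set Fm} {A B : Fm} (h : Thm H (Fm.Disj A B)) : Thm H (.Disj B A) :=
  mp' (mp' (Thm.bool (BoolAx.disjConj B A A)) h) (Thm.bool (BoolAx.ident A))

lemma cut {H : Set Fm} {A B C : Fm} (h1 : Thm H (Fm.Disj C A)) (h2 : Thm H (fmImp C B)) :
    Thm H (Fm.Disj A B) :=
  mp' (mp' (Thm.bool (BoolAx.disjConj A B C)) h1) h2

lemma assoc {H : Set Fm} {A B C : Fm} (h : Thm H (Fm.Disj A (Fm.Disj B C))) :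
    Thm H (Fm.Disj (Fm.Disj A B) C) :=
  mp' (Thm.bool (BoolAx.disjAssoc A B C)) h

lemma assoc' {H : Set Fm} {A B C : Fm} (h : Thm H (Fm.Disj (Fm.Disj A B) C)) :
    Thm H (Fm.Disj A (Fm.Disj B C)) :=
  comm (assoc (comm (assoc (comm h))))

lemma imp_disj2 (H : Set Fm) (A B : Fm) : Thm H (fmImp A (Fm.Disj B A)) := by
  have t : Thm H (Fm.Disj A (Fm.Neg A)) := comm (Thm.bool (BoolAx.ident A))
  have u : Thm H (Fm.Disj B (Fm.Disj A (Fm.Neg A))) := comm (disj1 B t)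
  have v : Thm H (Fm.Disj (Fm.Disj B A) (Fm.Neg A)) := assoc u
  exact cut v (Thm.bool (BoolAx.ident (Fm.Disj B A)))

lemma swap {H : Set Fm} {N M B : Fm} (h : Thm H (Fm.Disj N (Fm.Disj M B))) :
    Thm H (Fm.Disj M (Fm.Disj N B)) := by
  have s1 : Thm H (Fm.Disj B (Fm.Disj N M)) := comm (assoc h)
  have s2 : Thm H (Fm.Disj (Fm.Disj N M) (Fm.Disj N B)) := cut s1 (imp_disj2 H B N)
  have s3 : Thm H (Fm.Disj N (Fm.Disj M (Fm.Disj N B))) := assoc' s2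
  have s4 : Thm H (Fm.Disj (Fm.Disj M (Fm.Disj N B)) (Fm.Disj N B)) :=
    cut s3 (Thm.bool (BoolAx.disjI1 N B))
  have s5 : Thm H (Fm.Disj M (Fm.Disj (Fm.Disj N B) (Fm.Disj N B))) := assoc' s4
  have s6 : Thm H (Fm.Disj (Fm.Disj (Fm.Disj N B) (Fm.Disj N B)) M) := comm s5
  exact cut s6 (Thm.bool (BoolAx.disjCont (Fm.Disj N B)))

lemma impCut {H : Set Fm} {X C B : Fm} (h1 : Thm H (Fm.Disj X (Fm.Disj (Fm.Neg C) B)))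
    (h2 : Thm H (Fm.Disj X C)) : Thm H (Fm.Disj X B) := by
  have s1 : Thm H (Fm.Disj (Fm.Neg C) (Fm.Disj X B)) := swap h1
  have s2 : Thm H (Fm.Disj C X) := comm h2
  have s3 : Thm H (Fm.Disj X (Fm.Disj X B)) := cut s2 s1
  have s4 : Thm H (Fm.Disj (Fm.Disj X X) B) := assoc s3
  have s5 : Thm H (Fm.Disj B X) := cut s4 (Thm.bool (BoolAx.disjCont X))
  exact comm s5

lemma addImp {H : Set Fm} {D : Fm} (A : Fm) (h : Thm H D) : Thm H (fmImp A D) :=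
  comm (disj1 (Fm.Neg A) h)

lemma weaken {H H' : Set Fm} (hs : H ⊆ H') {B : Fm} (h : Thm H B) : Thm H' B := by
  have h1 : Thm H (fmImp (fmImp B B) B) := addImp _ h
  have h2 : Thm H' (fmImp B B) := Thm.bool (BoolAx.ident B)
  have := Thm.mp h1 h2
  rwa [Set.union_eq_self_of_subset_left hs] at this

lemma ded {G : Set Fm} {B : Fm} (h : Thm G B) :
    ∀ A : Fm, Thm (G \ {A}) (fmImp A B) := by
  induction h with
  | @hyp H C hC =>
      intro A
      by_cases hCA : C = A
      · subst hCA; exact Thm.bool (BoolAx.ident C)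
      · exact addImp A (Thm.hyp (Set.mem_diff_of_mem hC (by simpa using hCA)))
  | bool hb => exact fun A => addImp A (Thm.bool hb)
  | eq he => exact fun A => addImp A (Thm.eq he)
  | spec hs => exact fun A => addImp A (Thm.spec hs)
  | hf hh => exact fun A => addImp A (Thm.hf hh)
  | ind hi => exact fun A => addImp A (Thm.ind hi)
  | @mp H H' C B h1 h2 ih1 ih2 =>
      intro A
      have w1 : Thm ((H ∪ H') \ {A}) (fmImp A (fmImp C B)) :=
        weaken (Set.diff_subset_diff_left Set.subset_union_left) (ih1 A)
      have w2 : Thm ((H ∪ H') \ {A}) (fmImp A C) :=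
        weaken (Set.diff_subset_diff_left Set.subset_union_right) (ih2 A)
      exact impCut w1 w2
  | @exi H C B i h1 hiB hfr ih =>
      intro A
      by_cases hA : A ∈ H
      · have s1 : Thm (H \ {A}) (Fm.Disj (Fm.Neg C) (Fm.Disj (Fm.Neg A) B)) := swap (ih A)
        have hifree : i ∉ fvFm (Fm.Disj (Fm.Neg A) B) := by
          simp only [fvFm, Finset.mem_union]
          exact fun hc => hc.elim (hfr A hA) hiB
        have s2 : Thm (H \ {A}) (fmImp (Fm.Ex i C) (Fm.Disj (Fm.Neg A) B)) :=
          Thm.exi s1 hifree (fun D hD => hfr D hD.1)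
        exact swap s2
      · rw [Set.diff_singleton_eq_self hA]
        exact addImp A (Thm.exi h1 hiB hfr)

end DedAux

/-- The deduction theorem for the HF calculus. -/
theorem deduction (A B : Fm) (H : Set Fm) (h : Thm (insert A H) B) :
    Thm H (fmImp A B) := by
  have hd := DedAux.ded h A
  refine DedAux.weaken ?_ hd
  intro x hx
  rcases hx with ⟨hx1, hx2⟩
  rcases hx1 with rfl | hxH
  · exact absurd rfl hx2
  · exact hxH
end

section
/- Translation into de Bruijn form is injective on α-equivalence classes: for formulas A and B of the nominal syntax, trans_fm [] A = trans_fm [] B if and only if A = B (as α-equivalence classes). -/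
/-!
Everything rests on a renaming lemma (`transFm_cons_substFm`): if `k` does not occur in `A`, then
`A[k/i]` translated under `k :: e` and `A` translated under `i :: e` coincide, since in both the
bound name becomes index `0` and no other name is affected. Hence the translation respects
α-equivalence. Conversely, equal translations of `∃i A` and `∃j B` give, for every fresh `k`,
equal translations of `A[k/i]` and `B[k/j]` under `k :: e`, and these are α-equivalent by
recursion on the number of connectives, which renaming preserves. At the leaves, the translation
of terms is injective because a bound name is determined by its position in the environment.
-/

theorem lookup_eq_ite (e : List ℕ) (n x : ℕ) :
    lookup e n x = if x ∈ e then .DBInd (n + e.idxOf x) else .DBVar x := by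
  induction e generalizing n with
  | nil => rfl
  | cons y ys ih =>
    by_cases hxy : x = y
    · simp [lookup, hxy]
    · rw [lookup, if_neg hxy, ih, List.idxOf_cons_ne _ (Ne.symm hxy)]
      simp only [List.mem_cons, hxy, false_or]
      split_ifs <;> simp [Nat.add_right_comm, Nat.add_assoc]

theorem lookup_injective (e : List ℕ) (n : ℕ) : Function.Injective (lookup e n) := by
  intro x y h
  simp only [lookup_eq_ite] at h
  split_ifs at h with hx hy hy
  · exact List.idxOf_inj hx |>.mp (by simpa using h)
  all_goals simp_all

theorem transTm_injective (e : List ℕ) : Function.Injective (transTm e) := by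
  intro t u h
  induction t generalizing u <;> cases u <;>
    simp only [transTm, lookup_eq_ite, DbTm.DBEats.injEq, reduceCtorEq] at h
  case Zero.Zero => rfl
  case Var.Var x y => exact congrArg _ (lookup_injective e 0 (by simpa only [lookup_eq_ite]))
  case Eats.Eats ih₁ ih₂ _ _ => rw [ih₁ h.1, ih₂ h.2]
  all_goals split_ifs at h

theorem lookup_append_cons_congr {x y z : ℕ} {e₁ : List ℕ} (hx : x ∈ e₁ ∨ x ≠ y ∧ x ≠ z)
    (e₂ : List ℕ) (n : ℕ) : lookup (e₁ ++ y :: e₂) n x = lookup (e₁ ++ z :: e₂) n x := by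
  induction e₁ generalizing n with
  | nil => simp_all [lookup]
  | cons w ws ih =>
    by_cases hxw : x = w
    · simp [lookup, hxw]
    · simp only [List.mem_cons, hxw, false_or] at hx
      simp [lookup, hxw, ih hx]

theorem lookup_append_cons_self {x : ℕ} {e₁ : List ℕ} (hx : x ∉ e₁) (e₂ : List ℕ) (n : ℕ) :
    lookup (e₁ ++ x :: e₂) n x = .DBInd (n + e₁.length) := by
  simp [lookup_eq_ite, List.idxOf_append_of_notMem hx]

theorem transTm_append_cons_congr {y z : ℕ} {e₁ : List ℕ} (e₂ : List ℕ) {t : Tm}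
    (ht : ∀ x ∈ fvTm t, x ∈ e₁ ∨ x ≠ y ∧ x ≠ z) :
    transTm (e₁ ++ y :: e₂) t = transTm (e₁ ++ z :: e₂) t := by
  induction t with
  | Zero => rfl
  | Var x => exact lookup_append_cons_congr (ht x (by simp [fvTm])) e₂ 0
  | Eats t u iht ihu =>
    simp only [fvTm, Finset.mem_union] at ht
    simp only [transTm, iht fun x hx => ht x (.inl hx), ihu fun x hx => ht x (.inr hx)]

theorem transFm_append_cons_congr {y z : ℕ} {e₁ : List ℕ} (e₂ : List ℕ) {A : Fm}
    (hA : ∀ x ∈ fvFm A, x ∈ e₁ ∨ x ≠ y ∧ x ≠ z) :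
    transFm (e₁ ++ y :: e₂) A = transFm (e₁ ++ z :: e₂) A := by
  induction A generalizing e₁ with
  | Mem t u | Eq t u =>
    simp only [fvFm, Finset.mem_union] at hA
    simp only [transFm, transTm_append_cons_congr e₂ fun x hx => hA x (.inl hx),
      transTm_append_cons_congr e₂ fun x hx => hA x (.inr hx)]
  | Disj A B ihA ihB =>
    simp only [fvFm, Finset.mem_union] at hA
    simp only [transFm, ihA fun x hx => hA x (.inl hx), ihB fun x hx => hA x (.inr hx)]
  | Neg A ih => simp only [transFm, ih hA]
  | Ex j A ih =>
    refine congrArg DbFm.DBEx (ih (e₁ := j :: e₁) fun x hx => ?_)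
    by_cases hxj : x = j
    · simp [hxj]
    · simpa [hxj] using hA x (by simp [fvFm, hx, hxj])

theorem fvFm_subset_varsFm (A : Fm) : fvFm A ⊆ varsFm A := by
  induction A with
  | Mem t u | Eq t u => exact subset_rfl
  | Disj A B ihA ihB => exact Finset.union_subset_union ihA ihB
  | Neg A ih => exact ih
  | Ex j A ih => exact Finset.sdiff_subset.trans (ih.trans (Finset.subset_insert j _))

theorem transTm_append_substTm {i k : ℕ} {e₁ : List ℕ} (hk : k ∉ e₁) (hi : i ∉ e₁)
    (e₂ : List ℕ) {t : Tm} (hkt : k ∉ fvTm t) :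
    transTm (e₁ ++ k :: e₂) (substTm i (.Var k) t) = transTm (e₁ ++ i :: e₂) t := by
  induction t with
  | Zero => rfl
  | Var x =>
    by_cases hix : i = x
    · subst hix
      simp only [substTm, transTm, if_pos, lookup_append_cons_self hk, lookup_append_cons_self hi]
    · have hkx : x ≠ k := by rintro rfl; simp [fvTm] at hkt
      simp only [substTm, transTm, if_neg hix]
      exact lookup_append_cons_congr (.inr ⟨hkx, Ne.symm hix⟩) e₂ 0
  | Eats t u iht ihu =>
    simp only [fvTm, Finset.mem_union, not_or] at hkt
    simp only [substTm, transTm, iht hkt.1, ihu hkt.2]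

theorem transFm_append_substFm {i k : ℕ} {e₁ : List ℕ} (hk : k ∉ e₁) (hi : i ∉ e₁)
    (e₂ : List ℕ) {A : Fm} (hkA : k ∉ varsFm A) :
    transFm (e₁ ++ k :: e₂) (substFm i (.Var k) A) = transFm (e₁ ++ i :: e₂) A := by
  induction A generalizing e₁ with
  | Mem t u | Eq t u =>
    simp only [varsFm, Finset.mem_union, not_or] at hkA
    simp only [substFm, transFm, transTm_append_substTm hk hi e₂ hkA.1,
      transTm_append_substTm hk hi e₂ hkA.2]
  | Disj A B ihA ihB =>
    simp only [varsFm, Finset.mem_union, not_or] at hkA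
    simp only [substFm, transFm, ihA hk hi hkA.1, ihB hk hi hkA.2]
  | Neg A ih => simp only [substFm, transFm, ih hk hi hkA]
  | Ex j A ih =>
    simp only [varsFm, Finset.mem_insert, not_or] at hkA
    by_cases hij : i = j
    · -- `i` is rebound here, so it is looked up in the prefix and `k` does not occur
      subst hij
      simp only [substFm, if_pos, transFm]
      refine congrArg DbFm.DBEx (transFm_append_cons_congr (e₁ := i :: e₁) e₂ fun x hx => ?_)
      have hxk : x ≠ k := fun h => hkA.2 (h ▸ fvFm_subset_varsFm A hx)
      by_cases hxi : x = i <;> simp [hxi, hxk]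
    · simp only [substFm, if_neg hij, transFm]
      exact congrArg DbFm.DBEx
        (ih (e₁ := j :: e₁) (by simp [hk, hkA.1]) (by simp [hij, hi]) hkA.2)

theorem transFm_cons_substFm {i k : ℕ} {A : Fm} (hkA : k ∉ varsFm A) (e : List ℕ) :
    transFm (k :: e) (substFm i (.Var k) A) = transFm (i :: e) A :=
  transFm_append_substFm (e₁ := []) List.not_mem_nil List.not_mem_nil e hkA

/-- Unlike `sizeOf`, this ignores variable names, so it is invariant under renaming. -/
def Fm.size : Fm → ℕ
  | .Mem _ _ | .Eq _ _ => 0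
  | .Disj A B => A.size + B.size + 1
  | .Neg A | .Ex _ A => A.size + 1

theorem Fm.size_substFm (i : ℕ) (x : Tm) (A : Fm) : (substFm i x A).size = A.size := by
  induction A with
  | Mem t u | Eq t u => rfl
  | Disj A B ihA ihB => simp only [substFm, Fm.size, ihA, ihB]
  | Neg A ih => simp only [substFm, Fm.size, ih]
  | Ex j A ih => by_cases h : i = j <;> simp [substFm, h, Fm.size, ih]

theorem AEq.of_transFm_eq {e : List ℕ} {A B : Fm} (h : transFm e A = transFm e B) :
    AEq A B := by
  cases A <;> cases B <;> simp only [transFm, DbFm.DBMem.injEq, DbFm.DBEq.injEq,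
    DbFm.DBDisj.injEq, DbFm.DBNeg.injEq, DbFm.DBEx.injEq, reduceCtorEq] at h
  case Mem.Mem =>
    rw [transTm_injective e h.1, transTm_injective e h.2]
    exact .mem _ _
  case Eq.Eq =>
    rw [transTm_injective e h.1, transTm_injective e h.2]
    exact .eq _ _
  case Disj.Disj => exact .disj (of_transFm_eq h.1) (of_transFm_eq h.2)
  case Neg.Neg => exact .neg (of_transFm_eq h)
  case Ex.Ex i A j B =>
    refine .ex i j fun k hkA hkB _ _ => of_transFm_eq (e := k :: e) ?_
    rw [transFm_cons_substFm hkA, transFm_cons_substFm hkB, h]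
termination_by A.size
decreasing_by all_goals subst_vars; simp only [Fm.size, Fm.size_substFm]; omega

theorem AEq.transFm_eq {A B : Fm} (h : AEq A B) (e : List ℕ) : transFm e A = transFm e B := by
  induction h generalizing e with
  | mem | eq => rfl
  | disj _ _ ihA ihB => simp only [transFm, ihA, ihB]
  | neg _ ih => simp only [transFm, ih]
  | @ex A B i j _ ih =>
    obtain ⟨k, hk⟩ := Infinite.exists_notMem_finset (varsFm A ∪ varsFm B ∪ {i, j})
    simp only [Finset.mem_union, Finset.mem_insert, Finset.mem_singleton, not_or] at hk
    obtain ⟨⟨hkA, hkB⟩, hki, hkj⟩ := hk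
    simp only [transFm]
    rw [← transFm_cons_substFm (i := i) hkA, ← transFm_cons_substFm (i := j) hkB,
      ih k hkA hkB hki hkj]

/-- Translation to de Bruijn form is injective up to α-equivalence. -/
theorem trans_fm_inject (A B : Fm) :
    transFm [] A = transFm [] B ↔ AEq A B :=
  ⟨AEq.of_transFm_eq, fun h => h.transFm_eq []⟩
end

section
/- Every well-formed de Bruijn formula is the translation of some nominal formula: if wf_dbfm x then there exists a formula A (up to α-equivalence) with x = trans_fm [] A. -/
/-!
Each constructor of `WfDbFm` is mirrored by a constructor of `Fm`; the only nontrivial case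
is the quantifier. There, abstracting a name `v` at depth `e.length` from a translation under
the bound names `e` is the same as translating with `v` appended as the outermost bound name;
for `e = []` this gives `DBEx (abstDbFm v 0 (transFm [] A)) = transFm [] (.Ex v A)`.
-/

theorem abstDbTm_lookup (v x n : ℕ) (e : List ℕ) :
    abstDbTm v (n + e.length) (lookup e n x) = lookup (e ++ [v]) n x := by
  induction e generalizing n with
  | nil => by_cases h : x = v <;> simp [h, lookup, abstDbTm]
  | cons y ys ih =>
    by_cases h : x = y
    · simp [lookup, h, abstDbTm]
    · simpa [lookup, h, Nat.add_assoc, Nat.add_comm 1] using ih (n + 1)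

theorem abstDbTm_transTm (v : ℕ) (e : List ℕ) (t : Tm) :
    abstDbTm v e.length (transTm e t) = transTm (e ++ [v]) t := by
  induction t with
  | Zero => rfl
  | Var k => simpa [transTm] using abstDbTm_lookup v k 0 e
  | Eats a b iha ihb => simp [transTm, abstDbTm, iha, ihb]

theorem abstDbFm_transFm (v : ℕ) (e : List ℕ) (A : Fm) :
    abstDbFm v e.length (transFm e A) = transFm (e ++ [v]) A := by
  induction A generalizing e with
  | Mem t u => simp [transFm, abstDbFm, abstDbTm_transTm]
  | Eq t u => simp [transFm, abstDbFm, abstDbTm_transTm]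
  | Disj a b iha ihb => simp [transFm, abstDbFm, iha, ihb]
  | Neg a ih => simp [transFm, abstDbFm, ih]
  | Ex k a ih => simpa [transFm, abstDbFm] using ih (k :: e)

theorem WfDbTm.exists_eq_transTm {t : DbTm} (h : WfDbTm t) : ∃ s : Tm, t = transTm [] s := by
  induction h with
  | zero => exact ⟨.Zero, rfl⟩
  | var n => exact ⟨.Var n, rfl⟩
  | eats _ _ iht ihu =>
    obtain ⟨a, rfl⟩ := iht
    obtain ⟨b, rfl⟩ := ihu
    exact ⟨.Eats a b, rfl⟩

/-- Every well-formed de Bruijn formula is the translation of a formula. -/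
theorem wf_dbfm_imp_is_fm (x : DbFm) (h : WfDbFm x) :
    ∃ A : Fm, x = transFm [] A := by
  induction h with
  | mem ht hu =>
    obtain ⟨a, rfl⟩ := ht.exists_eq_transTm
    obtain ⟨b, rfl⟩ := hu.exists_eq_transTm
    exact ⟨.Mem a b, rfl⟩
  | eq ht hu =>
    obtain ⟨a, rfl⟩ := ht.exists_eq_transTm
    obtain ⟨b, rfl⟩ := hu.exists_eq_transTm
    exact ⟨.Eq a b, rfl⟩
  | disj _ _ ihA ihB =>
    obtain ⟨a, rfl⟩ := ihA
    obtain ⟨b, rfl⟩ := ihB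
    exact ⟨.Disj a b, rfl⟩
  | neg _ ih =>
    obtain ⟨a, rfl⟩ := ih
    exact ⟨.Neg a, rfl⟩
  | ex v _ ih =>
    obtain ⟨a, rfl⟩ := ih
    exact ⟨.Ex v a, congrArg DbFm.DBEx (abstDbFm_transFm v [] a)⟩
end

section
/- The Gödel coding of de Bruijn terms by HF sets is injective: distinct de Bruijn terms have distinct codes, where DBZero is coded as 0, DBVar with index n as the ordinal n+1, DBInd k as the pair ⟨⟨0,0,0,0,0,0,0,0⟩, k⟩, and DBEats t u as ⟨⟨0,0,0⟩, ⟨code(t), code(u)⟩⟩, with ⟨·,·⟩ the standard set-theoretic ordered pair and tuples right-nested pairs. -/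
/-! In the Ackermann model `memN` the unordered pair `upairN x y` has exactly the elements `x`
and `y`, so the usual set-theoretic argument shows that Kuratowski pairs are injective. A pair
never contains `0`, because its elements `{x}` and `{x, y}` are nonempty, while every nonzero
ordinal contains `0`; so the four kinds of codes (`0`, nonzero ordinals, and pairs tagged by the
distinct tuples `htupleN 6` and `htupleN 1`) never collide, and injectivity follows by structural
induction. -/

theorem memN_upairN {a x y : ℕ} : memN a (upairN x y) ↔ a = x ∨ a = y := by
  simp only [memN, upairN, Nat.testBit_or, Nat.testBit_two_pow, Bool.or_eq_true,
    decide_eq_true_eq]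
  exact or_congr eq_comm eq_comm

theorem upairN_eq_upairN_iff {x y z w : ℕ} :
    upairN x y = upairN z w ↔ x = z ∧ y = w ∨ x = w ∧ y = z := by
  rw [← Set.pair_eq_pair_iff, Set.ext_iff]
  simp only [Set.mem_insert_iff, Set.mem_singleton_iff, ← memN_upairN, memN]
  exact ⟨fun h a => by rw [h], fun h => Nat.eq_of_testBit_eq fun a => Bool.eq_iff_iff.2 (h a)⟩

theorem singN_eq_upairN_self (x : ℕ) : singN x = upairN x x := by
  simp [singN, upairN]

theorem hpairN_inj {x y z w : ℕ} : hpairN x y = hpairN z w ↔ x = z ∧ y = w := by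
  refine ⟨fun h => ?_, by rintro ⟨rfl, rfl⟩; rfl⟩
  simp only [hpairN, singN_eq_upairN_self, upairN_eq_upairN_iff] at h
  omega

theorem upairN_ne_zero (x y : ℕ) : upairN x y ≠ 0 := by
  simp [upairN, Nat.or_eq_zero_iff]

theorem hpairN_ne_zero (x y : ℕ) : hpairN x y ≠ 0 :=
  upairN_ne_zero _ _

theorem not_memN_zero_hpairN (x y : ℕ) : ¬ memN 0 (hpairN x y) := by
  rw [hpairN, memN_upairN, singN_eq_upairN_self]
  exact fun h => h.elim (upairN_ne_zero x x ·.symm) (upairN_ne_zero x y ·.symm)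

theorem memN_zero_ordN_succ (n : ℕ) : memN 0 (ordN (n + 1)) := by
  induction n with
  | zero => rfl
  | succ n ih => rw [memN, ordN, Nat.testBit_or]; exact Bool.or_eq_true_iff.2 (Or.inl ih)

theorem ordN_strictMono : StrictMono ordN :=
  strictMono_nat_of_lt_succ fun _ => Nat.lt_two_pow_self.trans_le Nat.right_le_or

theorem ordN_succ_ne_zero (n : ℕ) : ordN (n + 1) ≠ 0 :=
  (ordN_strictMono n.succ_pos).ne'

theorem ordN_ne_hpairN (n x y : ℕ) : ordN n ≠ hpairN x y := by
  cases n with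
  | zero => exact (hpairN_ne_zero x y).symm
  | succ n => exact fun h => not_memN_zero_hpairN x y (h ▸ memN_zero_ordN_succ n)

theorem htupleN_ne_zero (n : ℕ) : htupleN n ≠ 0 := by
  cases n <;> exact hpairN_ne_zero _ _

theorem htupleN_injective : Function.Injective htupleN := by
  intro m n h
  induction m generalizing n with
  | zero =>
    cases n with
    | zero => rfl
    | succ n => exact absurd (hpairN_inj.1 h).2.symm (htupleN_ne_zero n)
  | succ m ih =>
    cases n with
    | zero => exact absurd (hpairN_inj.1 h).2 (htupleN_ne_zero m)
    | succ n => exact congrArg _ (ih (hpairN_inj.1 h).2)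

/-- The Gödel coding of de Bruijn terms by HF sets is injective. -/
theorem quot_dbtm_inject : Function.Injective quotDbTm := by
  intro t u h
  induction t generalizing u with
  | DBEats t₁ t₂ ih₁ ih₂ =>
    cases u <;> simp only [quotDbTm, hpairN_inj, htupleN_injective.eq_iff, hpairN_ne_zero,
      (ordN_ne_hpairN _ _ _).symm, OfNat.one_ne_ofNat, and_false, true_and, DbTm.DBEats.injEq]
      at h ⊢
    exact ⟨ih₁ h.1, ih₂ h.2⟩
  | _ =>
    cases u <;> simp_all [quotDbTm, hpairN_inj, htupleN_injective.eq_iff,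
      ordN_strictMono.injective.eq_iff, hpairN_ne_zero, (hpairN_ne_zero _ _).symm,
      ordN_succ_ne_zero, (ordN_succ_ne_zero _).symm, ordN_ne_hpairN, (ordN_ne_hpairN _ _ _).symm]
end
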